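/- arXiv:2108.12994 — 3 statements merged into one kernel-verified Lean document; each statement's English description precedes it below -/
import Mathlib

section
/- Let G be a connected finite simple graph with χ(G) = Δ(G) and vs_χ(G) = 1. Then there exists a vertex v of G such that the degree of v in G equals Δ(G) and χ(G − v) = Δ(G) − 1. -/
open SimpleGraph

/-- The chromatic number of a graph, as a natural number (for finite graphs this
is the usual chromatic number). -/
noncomputable def chromNum {V : Type*} (G : SimpleGraph V) : ℕ :=
  sInf {n : ℕ | G.Colorable n}

/-- The maximum degree Δ(G) of a finite graph. -/
noncomputable def maxDeg {V : Type*} [Fintype V] (G : SimpleGraph V) : ℕ :=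
  Finset.univ.sup fun v => Nat.card (G.neighborSet v)

/-- The chromatic vertex stability number: the minimum number of vertices whose
deletion results in a graph with chromatic number χ(G) − 1. -/
noncomputable def vsChi {V : Type*} [Fintype V] (G : SimpleGraph V) : ℕ :=
  sInf {k : ℕ | ∃ S : Finset V, S.card = k ∧
    chromNum (G.induce ((S : Set V))ᶜ) = chromNum G - 1}

/-- The independent chromatic vertex stability number: the minimum size of an
independent set of vertices whose deletion results in a graph with chromatic
number χ(G) − 1. -/
noncomputable def ivsChi {V : Type*} [Fintype V] (G : SimpleGraph V) : ℕ :=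
  sInf {k : ℕ | ∃ S : Finset V, S.card = k ∧
    (∀ u ∈ S, ∀ v ∈ S, ¬ G.Adj u v) ∧
    chromNum (G.induce ((S : Set V))ᶜ) = chromNum G - 1}

/-- The chromatic edge stability number: the minimum number of edges whose
deletion results in a graph with chromatic number χ(G) − 1. -/
noncomputable def esChi {V : Type*} (G : SimpleGraph V) : ℕ :=
  sInf {k : ℕ | ∃ F : Finset (Sym2 V), ↑F ⊆ G.edgeSet ∧ F.card = k ∧
    chromNum (G.deleteEdges ↑F) = chromNum G - 1}

/-!
If `χ(G - w) = Δ - 1 < χ(G)`, every `(Δ - 1)`-coloring of `G - w` uses all its colors on the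
neighborhood of `w`. When moreover `deg w < Δ`, these neighbors carry pairwise distinct colors, so
for each neighbor `u` giving `w` the color of `u` shows `χ(G - u) = Δ - 1`. Hence, along a path
from the vertex provided by `vs_χ(G) = 1` to a vertex of maximum degree, the first vertex of
maximum degree is one as required.
-/

namespace SimpleGraph

variable {V : Type*} {G : SimpleGraph V}

lemma chromNum_le_of_colorable {n : ℕ} (h : G.Colorable n) : chromNum G ≤ n :=
  Nat.sInf_le h

lemma colorable_chromNum [Finite V] : G.Colorable (chromNum G) := by
  cases nonempty_fintype V
  exact Nat.sInf_mem (s := {n | G.Colorable n}) ⟨_, G.colorable_of_fintype⟩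

lemma not_colorable_of_lt_chromNum {n : ℕ} (h : n < chromNum G) : ¬ G.Colorable n :=
  fun hn => (chromNum_le_of_colorable hn).not_gt h

lemma Coloring.colorable_induce_extend {w : V} {n : ℕ} (c : (G.induce {w}ᶜ).Coloring (Fin n))
    (a : Fin n) {s : Set V} (ha : ∀ x (hx : x ≠ w), x ∈ s → G.Adj w x → c ⟨x, hx⟩ ≠ a) :
    (G.induce s).Colorable n := by
  classical
  refine ⟨Coloring.mk (fun x => if h : x.1 = w then a else c ⟨x.1, h⟩) ?_⟩
  rintro ⟨x, hxs⟩ ⟨y, hys⟩ (hxy : G.Adj x y)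
  by_cases hx : x = w <;> by_cases hy : y = w
  · exact (G.ne_of_adj hxy (hx.trans hy.symm)).elim
  · subst hx
    simpa [hy] using (ha y hy hys hxy).symm
  · subst hy
    simpa [hx] using ha x hx hxs hxy.symm
  · simpa [hx, hy] using c.valid (v := ⟨x, hx⟩) (w := ⟨y, hy⟩) hxy

lemma Coloring.colorable_extend {w : V} {n : ℕ} (c : (G.induce {w}ᶜ).Coloring (Fin n))
    (a : Fin n) (ha : ∀ x (hx : x ≠ w), G.Adj w x → c ⟨x, hx⟩ ≠ a) : G.Colorable n :=
  (c.colorable_induce_extend a (s := Set.univ) fun x hx _ => ha x hx).of_hom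
    G.induceUnivIso.symm.toHom

lemma chromNum_le_chromNum_induce_compl_singleton_add_one [Finite V] (w : V) :
    chromNum G ≤ chromNum (G.induce {w}ᶜ) + 1 := by
  obtain ⟨c⟩ := (G.induce {w}ᶜ).colorable_chromNum
  exact chromNum_le_of_colorable <|
    Coloring.colorable_extend ((Embedding.completeGraph Fin.castSuccEmb).toHom.comp c) (Fin.last _)
      fun _ _ _ => (Fin.castSucc_lt_last _).ne

lemma Coloring.surjective_restrict_neighborSet {w : V} {n : ℕ}
    (c : (G.induce {w}ᶜ).Coloring (Fin n)) (hG : ¬ G.Colorable n) :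
    Function.Surjective fun x : G.neighborSet w => c ⟨x, (G.ne_of_adj x.2).symm⟩ := by
  intro a
  by_contra! hmiss
  exact hG <| c.colorable_extend a fun x hx hwx => hmiss ⟨x, hwx⟩

/-- The at most `n` neighbors of `w` carry all `n` colors, hence pairwise distinct ones,
so `w` can take over the color of `u`. -/
lemma colorable_induce_compl_singleton_of_adj [Finite V] {w u : V} {n : ℕ}
    (hw : (G.induce {w}ᶜ).Colorable n) (hG : ¬ G.Colorable n)
    (hdeg : Nat.card (G.neighborSet w) ≤ n) (hu : G.Adj w u) :
    (G.induce {u}ᶜ).Colorable n := by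
  obtain ⟨c⟩ := hw
  have hinj := ((c.surjective_restrict_neighborSet hG).bijective_of_nat_card_le
    (by simpa using hdeg)).injective
  refine c.colorable_induce_extend (c ⟨u, (G.ne_of_adj hu).symm⟩) fun x hx hxu hwx hcol => ?_
  exact hxu (congrArg Subtype.val (@hinj ⟨x, hwx⟩ ⟨u, hu⟩ hcol))

lemma card_neighborSet_le_maxDeg [Fintype V] (v : V) : Nat.card (G.neighborSet v) ≤ maxDeg G :=
  Finset.le_sup (f := fun v => Nat.card (G.neighborSet v)) (Finset.mem_univ v)

lemma exists_card_neighborSet_eq_maxDeg [Fintype V] [Nonempty V] :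
    ∃ v, Nat.card (G.neighborSet v) = maxDeg G := by
  obtain ⟨v, -, hv⟩ := Finset.exists_mem_eq_sup Finset.univ Finset.univ_nonempty
    fun v => Nat.card (G.neighborSet v)
  exact ⟨v, hv.symm⟩

lemma exists_chromNum_induce_compl_singleton_of_vsChi_eq_one [Fintype V] (h : vsChi G = 1) :
    ∃ v, chromNum (G.induce {v}ᶜ) = chromNum G - 1 := by
  have hmem := Nat.sInf_mem (Nat.nonempty_of_sInf_eq_succ h)
  change vsChi G ∈ _ at hmem
  obtain ⟨S, hS, hchi⟩ := h ▸ hmem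
  obtain ⟨v, rfl⟩ := Finset.card_eq_one.mp hS
  exact ⟨v, by rwa [Finset.coe_singleton] at hchi⟩

lemma chromNum_induce_compl_singleton_of_adj [Fintype V] (hchi : chromNum G = maxDeg G)
    {w u : V} (hw : chromNum (G.induce {w}ᶜ) = maxDeg G - 1)
    (hdeg : Nat.card (G.neighborSet w) ≠ maxDeg G) (hu : G.Adj w u) :
    chromNum (G.induce {u}ᶜ) = maxDeg G - 1 := by
  have hle := G.card_neighborSet_le_maxDeg w
  have : Nonempty (G.neighborSet w) := ⟨⟨u, hu⟩⟩
  have hpos : 0 < Nat.card (G.neighborSet w) := Nat.card_pos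
  have hcol := colorable_induce_compl_singleton_of_adj (n := maxDeg G - 1)
    (hw ▸ colorable_chromNum) (not_colorable_of_lt_chromNum (by omega)) (by omega) hu
  have := chromNum_le_of_colorable hcol
  have := G.chromNum_le_chromNum_induce_compl_singleton_add_one u
  omega

lemma Reachable.exists_of_forall_adj {P Q : V → Prop} {v m : V} (h : G.Reachable v m)
    (hv : P v) (hm : Q m) (hstep : ∀ x y, G.Adj x y → P x → ¬ Q x → P y) :
    ∃ x, P x ∧ Q x := by
  by_contra! hPQ
  obtain ⟨p⟩ := h
  obtain ⟨d, -, hd, hd'⟩ := p.exists_boundary_dart {x | P x} hv fun hPm => hPQ m hPm hm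
  exact hd' (hstep _ _ d.adj hd (hPQ _ hd))

end SimpleGraph

/-- Let $G$ be a connected finite simple graph with $χ(G) = Δ(G)$ and
$vs_χ(G) = 1$. Then there exists a vertex $v$ with $d_G(v) = Δ(G)$ and
$χ(G - v) = Δ(G) - 1$. -/
theorem stmt_3 {V : Type*} [Fintype V] (G : SimpleGraph V)
    (hconn : G.Connected)
    (hchi : chromNum G = maxDeg G)
    (hvs : vsChi G = 1) :
    ∃ v : V, Nat.card (G.neighborSet v) = maxDeg G ∧
      chromNum (G.induce ({v} : Set V)ᶜ) = maxDeg G - 1 := by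
  have := hconn.nonempty
  obtain ⟨v, hv⟩ := exists_chromNum_induce_compl_singleton_of_vsChi_eq_one hvs
  obtain ⟨m, hm⟩ := G.exists_card_neighborSet_eq_maxDeg
  obtain ⟨x, hx, hx'⟩ := (hconn v m).exists_of_forall_adj (hchi ▸ hv) hm
    fun _ _ hadj hw hdeg => chromNum_induce_compl_singleton_of_adj hchi hw hdeg hadj
  exact ⟨x, hx', hx⟩
end

section
/- If G is a finite simple graph with at least one edge and χ(G) > Δ(G)/2 + 1, then vs_χ(G) = es_χ(G). -/
open SimpleGraph

/-!
Since χ(G) > Δ(G)/2 + 1, every vertex has fewer than 2(χ(G) - 1) neighbours. Hence, given a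
set S of vertices whose deletion leaves a (χ(G) - 1)-colourable graph, the vertices of S can be
put back one at a time: by pigeonhole some colour occurs at most once among the neighbours of
the returning vertex, so deleting at most one edge lets it take that colour. This gives
es_χ(G) ≤ vs_χ(G). Conversely, deleting one endpoint of every edge of an optimal edge set gives
vs_χ(G) ≤ es_χ(G). In both directions a set that brings the chromatic number down to at most
χ(G) - 1 contains one bringing it to exactly χ(G) - 1, because deleting a single vertex or edge
lowers the chromatic number by at most one.
-/

open Finset

/-- Discrete intermediate value theorem along the subsets of `s`. -/
theorem Finset.exists_subset_eq_of_le_insert_add_one {α : Type*} [DecidableEq α]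
    {f : Finset α → ℕ} (hf : ∀ t a, f t ≤ f (insert a t) + 1) {k : ℕ} {s : Finset α}
    (hs : f s ≤ k) (hk : k ≤ f ∅) : ∃ t ⊆ s, f t = k := by
  induction s using Finset.induction_on with
  | empty => exact ⟨∅, subset_rfl, le_antisymm hs hk⟩
  | insert a s _ ih =>
    by_cases h : f s ≤ k
    · obtain ⟨t, hts, ht⟩ := ih h
      exact ⟨t, hts.trans (subset_insert a s), ht⟩
    · exact ⟨insert a s, subset_rfl, by have := hf s a; omega⟩

namespace SimpleGraph

variable {V : Type*} {G : SimpleGraph V} {n : ℕ}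

theorem colorable_succ_of_induce_compl {t : Set V} (ht : t.Subsingleton)
    (h : (G.induce tᶜ).Colorable n) : G.Colorable (n + 1) := by
  classical
  obtain ⟨c⟩ := h
  let d : G.Coloring (Option (Fin n)) :=
    Coloring.mk (fun v => if hv : v ∈ t then none else some (c ⟨v, hv⟩)) fun {v w} hvw => by
      by_cases hv : v ∈ t <;> by_cases hw : w ∈ t
      · exact absurd (ht hv hw) (G.ne_of_adj hvw)
      · simp [hv, hw]
      · simp [hv, hw]
      · simpa [hv, hw] using c.valid (G := G.induce tᶜ) (v := ⟨v, hv⟩) (w := ⟨w, hw⟩) hvw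
  simpa using d.colorable

theorem Colorable.induce_compl_of_insert {s : Set V} {a : V}
    (h : (G.induce (insert a s)ᶜ).Colorable n) : (G.induce sᶜ).Colorable (n + 1) := by
  refine colorable_succ_of_induce_compl (t := {v | v.1 = a})
    (fun x hx y hy => Subtype.ext (hx.trans hy.symm)) (h.of_hom ?_)
  refine ⟨fun v => ⟨v.1.1, ?_⟩, fun hvw => hvw⟩
  simp only [Set.mem_compl_iff, Set.mem_insert_iff, not_or]
  exact ⟨v.2, v.1.2⟩

theorem Colorable.deleteEdges_of_insert {s : Set (Sym2 V)} {e : Sym2 V}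
    (h : (G.deleteEdges (insert e s)).Colorable n) : (G.deleteEdges s).Colorable (n + 1) := by
  obtain ⟨u, hu⟩ : ∃ u, u ∈ e := ⟨_, e.out_fst_mem⟩
  refine colorable_succ_of_induce_compl (Set.subsingleton_singleton (a := u)) (h.of_hom ?_)
  refine ⟨fun v => v.1, fun {x y} hxy => ?_⟩
  obtain ⟨hG, hs⟩ := deleteEdges_adj.mp hxy
  refine deleteEdges_adj.mpr ⟨hG, fun hins => ?_⟩
  rcases hins with he | hmem
  · rw [← he, Sym2.mem_iff] at hu
    rcases hu with hx | hy
    · exact x.2 hx.symm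
    · exact y.2 hy.symm
  · exact hs hmem

theorem Colorable.induce_compl_of_deleteEdges {S : Set V} {F : Set (Sym2 V)}
    (hS : ∀ e ∈ F, ∃ v ∈ S, v ∈ e) (h : (G.deleteEdges F).Colorable n) :
    (G.induce Sᶜ).Colorable n := by
  refine h.of_hom ⟨fun v => v.1, fun {x y} hxy => deleteEdges_adj.mpr ⟨hxy, fun he => ?_⟩⟩
  obtain ⟨v, hvS, hv⟩ := hS _ he
  rcases Sym2.mem_iff.mp hv with rfl | rfl
  · exact x.2 hvS
  · exact y.2 hvS

theorem colorable_induce_compl_empty_iff :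
    (G.induce (∅ : Set V)ᶜ).Colorable n ↔ G.Colorable n := by
  rw [Set.compl_empty]
  exact colorable_congr (induceUnivIso G)

end SimpleGraph

open SimpleGraph

section ChromNum

variable {V : Type*} {G : SimpleGraph V} {n : ℕ}

theorem chromNum_le (h : G.Colorable n) : chromNum G ≤ n :=
  Nat.sInf_le h

theorem colorable_chromNum [Finite V] (G : SimpleGraph V) : G.Colorable (chromNum G) := by
  have := Fintype.ofFinite V
  exact Nat.sInf_mem (s := {n | G.Colorable n}) ⟨_, G.colorable_of_fintype⟩

theorem two_le_chromNum [Finite V] (hG : G.edgeSet.Nonempty) : 2 ≤ chromNum G := by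
  by_contra! h
  exact edgeSet_nonempty.mp hG (colorable_one_iff.mp ((colorable_chromNum G).mono (by omega)))

theorem chromNum_induce_compl_empty : chromNum (G.induce (∅ : Set V)ᶜ) = chromNum G := by
  simp only [chromNum, colorable_induce_compl_empty_iff]

theorem chromNum_induce_compl_le_insert [Finite V] (s : Set V) (a : V) :
    chromNum (G.induce sᶜ) ≤ chromNum (G.induce (insert a s)ᶜ) + 1 :=
  chromNum_le (colorable_chromNum _).induce_compl_of_insert

theorem chromNum_deleteEdges_le_insert [Finite V] (s : Set (Sym2 V)) (e : Sym2 V) :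
    chromNum (G.deleteEdges s) ≤ chromNum (G.deleteEdges (insert e s)) + 1 :=
  chromNum_le (colorable_chromNum _).deleteEdges_of_insert

theorem exists_subset_chromNum_induce_compl_eq [Finite V] {k : ℕ} {S₀ : Finset V}
    (h : (G.induce (↑S₀)ᶜ).Colorable k) (hk : k ≤ chromNum G) :
    ∃ S ⊆ S₀, chromNum (G.induce (↑S)ᶜ) = k := by
  classical
  refine Finset.exists_subset_eq_of_le_insert_add_one (f := fun S => chromNum (G.induce (↑S)ᶜ))
    (s := S₀) (fun S a => ?_) (chromNum_le h) (by rwa [coe_empty, chromNum_induce_compl_empty])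
  rw [coe_insert]
  exact chromNum_induce_compl_le_insert (↑S) a

theorem exists_subset_chromNum_deleteEdges_eq [Finite V] {k : ℕ} {F₀ : Finset (Sym2 V)}
    (h : (G.deleteEdges ↑F₀).Colorable k) (hk : k ≤ chromNum G) :
    ∃ F ⊆ F₀, chromNum (G.deleteEdges ↑F) = k := by
  classical
  refine Finset.exists_subset_eq_of_le_insert_add_one (f := fun F => chromNum (G.deleteEdges ↑F))
    (s := F₀) (fun F e => ?_) (chromNum_le h) (by simpa using hk)
  rw [coe_insert]
  exact chromNum_deleteEdges_le_insert (↑F) e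

theorem exists_card_eq_esChi [Finite V] (h2 : 2 ≤ chromNum G) :
    ∃ F : Finset (Sym2 V), ↑F ⊆ G.edgeSet ∧ F.card = esChi G ∧
      chromNum (G.deleteEdges ↑F) = chromNum G - 1 := by
  have := Fintype.ofFinite V
  classical
  have hall : (G.deleteEdges ↑G.edgeFinset).Colorable (chromNum G - 1) := by
    rw [coe_edgeFinset, deleteEdges_edgeSet, sdiff_self]
    exact (colorable_one_iff.mpr rfl).mono (by omega)
  obtain ⟨F, hF, hFχ⟩ := exists_subset_chromNum_deleteEdges_eq hall (Nat.sub_le _ _)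
  exact Nat.sInf_mem (s := {k | ∃ F : Finset (Sym2 V), ↑F ⊆ G.edgeSet ∧ F.card = k ∧
      chromNum (G.deleteEdges ↑F) = chromNum G - 1})
    ⟨_, F, (coe_subset.mpr hF).trans (coe_edgeFinset G).le, rfl, hFχ⟩

theorem esChi_le_card [Finite V] {F : Finset (Sym2 V)} (hF : ↑F ⊆ G.edgeSet)
    (h : (G.deleteEdges ↑F).Colorable (chromNum G - 1)) : esChi G ≤ F.card := by
  obtain ⟨F', hF'F, hF'⟩ := exists_subset_chromNum_deleteEdges_eq h (Nat.sub_le _ _)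
  exact (Nat.sInf_le ⟨F', (coe_subset.mpr hF'F).trans hF, rfl, hF'⟩ : esChi G ≤ F'.card).trans
    (card_le_card hF'F)

end ChromNum

section MaxDeg

variable {V : Type*} [Fintype V]

theorem card_neighborSet_le_maxDeg (G : SimpleGraph V) (v : V) :
    Nat.card (G.neighborSet v) ≤ maxDeg G :=
  Finset.le_sup (f := fun v => Nat.card (G.neighborSet v)) (mem_univ v)

theorem maxDeg_deleteEdges_le (G : SimpleGraph V) (s : Set (Sym2 V)) :
    maxDeg (G.deleteEdges s) ≤ maxDeg G :=
  Finset.sup_le fun v _ =>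
    (Nat.card_mono (Set.toFinite _) fun _ hw => (deleteEdges_adj.mp hw).1).trans
      (card_neighborSet_le_maxDeg G v)

end MaxDeg

section Stability

variable {V : Type*} [Fintype V] {G : SimpleGraph V} {n : ℕ}

theorem exists_colorable_deleteEdges_induce_compl_of_insert {a : V} {s : Set V}
    (hdeg : Nat.card (G.neighborSet a) < 2 * n) (h : (G.induce (insert a s)ᶜ).Colorable n) :
    ∃ F : Finset (Sym2 V), ↑F ⊆ G.edgeSet ∧ F.card ≤ 1 ∧
      ((G.deleteEdges ↑F).induce sᶜ).Colorable n := by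
  classical
  obtain ⟨c⟩ := h
  have hn : 0 < n := by omega
  let f : V → Fin n := fun v => if hv : v ∈ (insert a s)ᶜ then c ⟨v, hv⟩ else ⟨0, hn⟩
  obtain ⟨i, -, hi⟩ := exists_card_fiber_lt_of_card_lt_mul (s := G.neighborFinset a)
    (t := univ) (f := f) (n := 2) (by
      rw [card_neighborFinset_eq_degree, card_univ, Fintype.card_fin,
        ← card_neighborSet_eq_degree, ← Nat.card_eq_fintype_card]
      omega)
  set M := {v ∈ G.neighborFinset a | f v = i}
  set F := M.image (s(a, ·))
  have hF : ∀ w, G.Adj a w → f w = i → s(a, w) ∈ F := fun w haw hw =>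
    mem_image_of_mem _ (mem_filter.mpr ⟨(mem_neighborFinset G a w).mpr haw, hw⟩)
  refine ⟨F, ?_, card_image_le.trans (by omega), ⟨Coloring.mk
    (fun v => if v.1 = a then i else f v) fun {v w} hvw => ?_⟩⟩
  · simp only [F, coe_image, Set.image_subset_iff]
    intro w hw
    exact (mem_neighborFinset G a w).mp (mem_filter.mp hw).1
  obtain ⟨hG, hvwF⟩ : G.Adj v w ∧ s(v.1, w.1) ∉ (F : Set (Sym2 V)) := deleteEdges_adj.mp hvw
  have hv := v.2
  have hw := w.2
  simp only [Set.mem_compl_iff] at hv hw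
  by_cases hva : v.1 = a <;> by_cases hwa : w.1 = a <;> simp only [hva, hwa, if_true, if_false]
  · exact absurd (hva.trans hwa.symm) (G.ne_of_adj hG)
  · exact fun hi => hvwF (by rw [hva] at hG ⊢; exact hF _ hG hi.symm)
  · exact fun hi => hvwF (by rw [hwa] at hG ⊢; rw [Sym2.eq_swap]; exact hF _ hG.symm hi)
  · have hv' : v.1 ∈ (insert a s)ᶜ := by simp [hva, hv]
    have hw' : w.1 ∈ (insert a s)ᶜ := by simp [hwa, hw]
    rw [show f v = c ⟨v, hv'⟩ from dif_pos hv', show f w = c ⟨w, hw'⟩ from dif_pos hw']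
    exact c.valid (G := G.induce (insert a s)ᶜ) hG

theorem exists_colorable_deleteEdges_of_induce_compl (hΔ : maxDeg G < 2 * n) (S : Finset V)
    (h : (G.induce (↑S)ᶜ).Colorable n) :
    ∃ F : Finset (Sym2 V), ↑F ⊆ G.edgeSet ∧ F.card ≤ S.card ∧
      (G.deleteEdges ↑F).Colorable n := by
  classical
  induction S using Finset.induction_on generalizing G with
  | empty =>
    refine ⟨∅, by simp, by simp, ?_⟩
    rwa [coe_empty, deleteEdges_empty, ← colorable_induce_compl_empty_iff, ← coe_empty]
  | insert a S ha ih =>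
    rw [coe_insert] at h
    obtain ⟨F₁, hF₁G, hF₁, h₁⟩ := exists_colorable_deleteEdges_induce_compl_of_insert
      ((card_neighborSet_le_maxDeg G a).trans_lt hΔ) h
    obtain ⟨F₂, hF₂G, hF₂, h₂⟩ := ih ((maxDeg_deleteEdges_le G _).trans_lt hΔ) h₁
    refine ⟨F₁ ∪ F₂, ?_, ?_, ?_⟩
    · rw [coe_union]
      exact Set.union_subset hF₁G (hF₂G.trans (by simp [edgeSet_deleteEdges]))
    · rw [card_insert_of_notMem ha]
      have := card_union_le F₁ F₂
      omega
    · rwa [coe_union, ← deleteEdges_deleteEdges]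

theorem exists_card_eq_vsChi (G : SimpleGraph V) :
    ∃ S : Finset V, S.card = vsChi G ∧ chromNum (G.induce (↑S)ᶜ) = chromNum G - 1 := by
  have hall : (G.induce (↑(univ : Finset V))ᶜ).Colorable (chromNum G - 1) := by
    rw [coe_univ, Set.compl_univ]
    exact .of_isEmpty _
  obtain ⟨S, -, hS⟩ := exists_subset_chromNum_induce_compl_eq hall (Nat.sub_le _ _)
  exact Nat.sInf_mem (s := {k | ∃ S : Finset V, S.card = k ∧
    chromNum (G.induce (↑S)ᶜ) = chromNum G - 1}) ⟨_, S, rfl, hS⟩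

theorem vsChi_le_card {S : Finset V} (h : (G.induce (↑S)ᶜ).Colorable (chromNum G - 1)) :
    vsChi G ≤ S.card := by
  obtain ⟨T, hTS, hT⟩ := exists_subset_chromNum_induce_compl_eq h (Nat.sub_le _ _)
  exact (Nat.sInf_le ⟨T, rfl, hT⟩ : vsChi G ≤ T.card).trans (card_le_card hTS)

theorem vsChi_le_esChi (h2 : 2 ≤ chromNum G) : vsChi G ≤ esChi G := by
  classical
  obtain ⟨F, -, hFcard, hF⟩ := exists_card_eq_esChi h2
  set S := F.image fun e => e.out.1
  have hcover : ∀ e ∈ (F : Set (Sym2 V)), ∃ v ∈ (S : Set V), v ∈ e :=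
    fun e he => ⟨e.out.1, mem_image_of_mem _ he, e.out_fst_mem⟩
  calc vsChi G ≤ S.card :=
        vsChi_le_card ((hF ▸ colorable_chromNum _).induce_compl_of_deleteEdges hcover)
    _ ≤ F.card := card_image_le
    _ = esChi G := hFcard

theorem esChi_le_vsChi (hΔ : maxDeg G < 2 * (chromNum G - 1)) : esChi G ≤ vsChi G := by
  obtain ⟨S, hScard, hS⟩ := exists_card_eq_vsChi G
  obtain ⟨F, hFG, hFS, hF⟩ :=
    exists_colorable_deleteEdges_of_induce_compl hΔ S (hS ▸ colorable_chromNum _)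
  exact (esChi_le_card hFG hF).trans (hFS.trans hScard.le)

end Stability

/-- If $G$ is a finite simple graph with at least one edge and
$χ(G) > Δ(G)/2 + 1$, then $vs_χ(G) = es_χ(G)$. -/
theorem stmt_4 {V : Type*} [Fintype V] (G : SimpleGraph V)
    (hedge : G.edgeSet.Nonempty)
    (hchi : (chromNum G : ℝ) > (maxDeg G : ℝ) / 2 + 1) :
    vsChi G = esChi G := by
  have h2 : 2 ≤ chromNum G := two_le_chromNum hedge
  have hΔ : maxDeg G < 2 * (chromNum G - 1) := by
    have : ((maxDeg G : ℕ) : ℝ) < ((2 * (chromNum G - 1) : ℕ) : ℝ) := by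
      push_cast [Nat.cast_sub (by omega : 1 ≤ chromNum G)]
      linarith
    exact_mod_cast this
  exact le_antisymm (vsChi_le_esChi h2) (esChi_le_vsChi hΔ)
end

section
/- For all natural numbers n ≥ 2 and k ≥ 3 there exists a finite simple graph G with χ(G) = k, Δ(G) = 2k, vs_χ(G) = 2n, and ivs_χ(G) = 3n; in particular, the equality vs_χ = ivs_χ can fail for graphs with χ(G) = Δ(G)/2. -/
open SimpleGraph

/-!
Take `n` disjoint copies of a gadget `H` with `χ(H) = k` and `Δ(H) = 2k` in which every vertex
and every pair of non-adjacent vertices misses some `k`-clique, while deleting a suitable pair, or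
a suitable independent triple, leaves a `(k-1)`-colourable graph. A vertex set whose deletion
lowers the chromatic number must then meet every copy in at least two vertices, and in at least
three if it is independent; deleting the pair (the triple) from every copy achieves this, and
such a minimum deletion lowers `χ` by exactly one, because re-inserting a single vertex costs at
most one colour. For `k = 3` the gadget is a fixed graph on nine vertices; for `k ≥ 4` it is a
ring of four `k`-cliques glued along the edges of a 4-cycle of a `K₄`.
-/

open Finset

variable {V W : Type*}

section Coloring

variable {G : SimpleGraph V}

theorem colorable_induce_iff {s : Set V} {c : ℕ} :
    (G.induce s).Colorable c ↔
      ∃ f : V → ℕ, (∀ v ∈ s, f v < c) ∧ ∀ u ∈ s, ∀ v ∈ s, G.Adj u v → f u ≠ f v := by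
  classical
  rw [colorable_iff_exists_bdd_nat_coloring]
  constructor
  · rintro ⟨C, hC⟩
    refine ⟨fun v => if hv : v ∈ s then C ⟨v, hv⟩ else 0, fun v hv => by simpa [hv] using hC _,
      fun u hu v hv huv => ?_⟩
    simpa [hu, hv] using C.valid (show (G.induce s).Adj ⟨u, hu⟩ ⟨v, hv⟩ from huv)
  · rintro ⟨f, hlt, hf⟩
    exact ⟨Coloring.mk (fun v => f v) fun {u v} h => hf u u.2 v v.2 h, fun v => hlt v v.2⟩

theorem SimpleGraph.Colorable.induce_compl_erase [DecidableEq V] {S : Finset V} {c : ℕ}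
    (h : (G.induce (↑S)ᶜ).Colorable c) (v : V) :
    (G.induce (↑(S.erase v))ᶜ).Colorable (c + 1) := by
  obtain ⟨f, hlt, hf⟩ := colorable_induce_iff.1 h
  have hS : ∀ x ∈ (↑(S.erase v) : Set V)ᶜ, x ≠ v → x ∈ (↑S : Set V)ᶜ := fun x hx hxv => by
    simpa [hxv] using hx
  refine colorable_induce_iff.2 ⟨Function.update f v c, fun u hu => ?_, fun u hu w hw huw => ?_⟩
  · rcases eq_or_ne u v with rfl | huv
    · simp
    · rw [Function.update_of_ne huv]
      exact Nat.lt_succ_of_lt (hlt u (hS u hu huv))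
  · rcases eq_or_ne u v with rfl | huv
    · have hwu : w ≠ u := (G.ne_of_adj huw).symm
      simpa [hwu] using (hlt w (hS w hw hwu)).ne'
    rcases eq_or_ne w v with rfl | hwv
    · simpa [huv] using (hlt u (hS u hu huv)).ne
    · simpa [huv, hwv] using hf u (hS u hu huv) w (hS w hw hwv) huw

theorem not_colorable_induce_of_isNClique {s : Set V} {Q : Finset V} {k c : ℕ}
    (hQ : G.IsNClique k Q) (hQs : ↑Q ⊆ s) (hc : c < k) : ¬ (G.induce s).Colorable c := by
  intro h
  obtain ⟨f, hlt, hf⟩ := colorable_induce_iff.1 h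
  have : Q.card ≤ (range c).card :=
    card_le_card_of_injOn f (fun v hv => mem_range.2 (hlt v (hQs hv))) fun u hu v hv huv =>
      by_contra fun hne => hf u (hQs hu) v (hQs hv) (hQ.isClique hu hv hne) huv
  rw [hQ.card_eq, card_range] at this
  omega

theorem chromNum_le_iff [Finite V] {c : ℕ} : chromNum G ≤ c ↔ G.Colorable c := by
  have : G.Colorable (chromNum G) := by
    cases nonempty_fintype V
    exact Nat.sInf_mem (s := {n | G.Colorable n}) ⟨_, G.colorable_of_fintype⟩
  exact ⟨fun h => this.mono h, fun h => Nat.sInf_le h⟩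

end Coloring

section Stability

variable [Fintype V] [DecidableEq V] {G : SimpleGraph V}

theorem sInf_card_deletion_eq {P : Finset V → Prop} (hP : ∀ S v, P S → P (S.erase v))
    {c b : ℕ} (hχ : chromNum G = c + 1) {S₀ : Finset V} (hS₀ : S₀.card = b) (hb : 0 < b)
    (hPS₀ : P S₀) (hcol : (G.induce (↑S₀)ᶜ).Colorable c)
    (hmin : ∀ S, P S → S.card < b → ¬ (G.induce (↑S)ᶜ).Colorable c) :
    sInf {j | ∃ S : Finset V, S.card = j ∧ P S ∧
      chromNum (G.induce (↑S)ᶜ) = chromNum G - 1} = b := by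
  rw [hχ, Nat.add_sub_cancel]
  -- putting back one vertex of `S₀` costs at most one colour
  have hχS₀ : chromNum (G.induce (↑S₀)ᶜ) = c := by
    obtain ⟨v, hv⟩ := card_pos.1 (hS₀ ▸ hb)
    refine le_antisymm (chromNum_le_iff.2 hcol) (not_lt.1 fun hlt => ?_)
    have := (chromNum_le_iff.1 (Nat.le_sub_one_of_lt hlt)).induce_compl_erase v
    rw [Nat.sub_add_cancel (by omega : 1 ≤ c)] at this
    exact hmin _ (hP _ _ hPS₀) (by rw [card_erase_of_mem hv]; omega) this
  refine le_antisymm (Nat.sInf_le ⟨S₀, hS₀, hPS₀, hχS₀⟩) (le_csInf ⟨b, S₀, hS₀, hPS₀, hχS₀⟩ ?_)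
  rintro j ⟨S, rfl, hPS, hS⟩
  exact not_lt.1 fun hlt => hmin S hPS hlt (chromNum_le_iff.1 hS.le)

theorem vsChi_eq_of {c b : ℕ} (hχ : chromNum G = c + 1) {S₀ : Finset V} (hS₀ : S₀.card = b)
    (hb : 0 < b) (hcol : (G.induce (↑S₀)ᶜ).Colorable c)
    (hmin : ∀ S : Finset V, S.card < b → ¬ (G.induce (↑S)ᶜ).Colorable c) :
    vsChi G = b := by
  unfold vsChi
  simpa only [true_and] using sInf_card_deletion_eq (P := fun _ => True) (fun _ _ _ => trivial)
    hχ hS₀ hb trivial hcol fun S _ => hmin S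

theorem ivsChi_eq_of {c b : ℕ} (hχ : chromNum G = c + 1) {S₀ : Finset V} (hS₀ : S₀.card = b)
    (hb : 0 < b) (hind : ∀ u ∈ S₀, ∀ v ∈ S₀, ¬ G.Adj u v)
    (hcol : (G.induce (↑S₀)ᶜ).Colorable c)
    (hmin : ∀ S : Finset V, (∀ u ∈ S, ∀ v ∈ S, ¬ G.Adj u v) → S.card < b →
      ¬ (G.induce (↑S)ᶜ).Colorable c) :
    ivsChi G = b :=
  sInf_card_deletion_eq
    (fun _ _ hS u hu v hv => hS u (mem_of_mem_erase hu) v (mem_of_mem_erase hv))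
    hχ hS₀ hb hind hcol hmin

end Stability

theorem maxDeg_eq_of_degree [Fintype V] {G : SimpleGraph V} [DecidableRel G.Adj] {d : ℕ}
    (hle : ∀ v, G.degree v ≤ d) (v₀ : V) (hv₀ : d ≤ G.degree v₀) : maxDeg G = d := by
  have hcard : ∀ v, Nat.card (G.neighborSet v) = G.degree v := fun v => by
    rw [Nat.card_eq_fintype_card, card_neighborSet_eq_degree]
  simp only [maxDeg, hcard]
  exact le_antisymm (Finset.sup_le fun v _ => hle v)
    (hv₀.trans (Finset.le_sup (f := fun v => G.degree v) (mem_univ v₀)))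

namespace SimpleGraph.Iso

variable {V' : Type*} {G : SimpleGraph V} {G' : SimpleGraph V'}

theorem chromNum_eq (e : G ≃g G') : chromNum G = chromNum G' := by
  unfold chromNum
  congr 1
  ext c
  exact ⟨fun h => h.of_hom e.symm.toHom, fun h => h.of_hom e.toHom⟩

theorem chromNum_induce_compl_map_eq (e : G ≃g G') (S : Finset V) :
    chromNum (G'.induce (↑(S.map e.toEquiv.toEmbedding))ᶜ) = chromNum (G.induce (↑S)ᶜ) := by
  unfold chromNum
  congr 1
  ext c
  refine ⟨fun h => h.of_hom (induceHom e.toHom fun v hv => ?_),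
    fun h => h.of_hom (induceHom e.symm.toHom fun v hv => ?_)⟩
  · simpa [mem_map_equiv] using hv
  · exact fun hS => hv (mem_map_equiv.2 hS)

theorem maxDeg_eq [Fintype V] [Fintype V'] (e : G ≃g G') : maxDeg G = maxDeg G' := by
  have hcard : ∀ v, Nat.card (G'.neighborSet (e v)) = Nat.card (G.neighborSet v) := fun v =>
    Nat.card_congr (e.toEquiv.subtypeEquiv fun u => e.map_adj_iff.symm).symm
  simp only [maxDeg, ← map_univ_equiv e.toEquiv, sup_map]
  exact sup_congr rfl fun v _ => (hcard v).symm

variable [Fintype V] [Fintype V']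

theorem vsChi_eq (e : G ≃g G') : vsChi G = vsChi G' := by
  unfold vsChi
  congr 1
  ext j
  constructor
  · rintro ⟨S, rfl, hS⟩
    exact ⟨_, card_map _, by rw [e.chromNum_induce_compl_map_eq, hS, e.chromNum_eq]⟩
  · rintro ⟨S, rfl, hS⟩
    exact ⟨_, card_map _, by rw [e.symm.chromNum_induce_compl_map_eq, hS, e.symm.chromNum_eq]⟩

theorem ivsChi_eq (e : G ≃g G') : ivsChi G = ivsChi G' := by
  unfold ivsChi
  congr 1
  ext j
  constructor
  · rintro ⟨S, rfl, hind, hS⟩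
    refine ⟨_, card_map _, ?_, by rw [e.chromNum_induce_compl_map_eq, hS, e.chromNum_eq]⟩
    simpa only [forall_mem_map, Equiv.coe_toEmbedding, RelIso.coe_fn_toEquiv, e.map_adj_iff]
      using hind
  · rintro ⟨S, rfl, hind, hS⟩
    refine ⟨_, card_map _, ?_,
      by rw [e.symm.chromNum_induce_compl_map_eq, hS, e.symm.chromNum_eq]⟩
    simpa only [forall_mem_map, Equiv.coe_toEmbedding, RelIso.coe_fn_toEquiv,
      e.symm.map_adj_iff] using hind

end SimpleGraph.Iso

section Copies

variable (H : SimpleGraph W) (n : ℕ)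

abbrev copies : SimpleGraph (Fin n × W) := (⊥ : SimpleGraph (Fin n)) □ H

variable {H n}

theorem copies_adj {x y : Fin n × W} : (copies H n).Adj x y ↔ x.1 = y.1 ∧ H.Adj x.2 y.2 := by
  simp [and_comm]

def copiesProj : copies H n →g H where
  toFun := Prod.snd
  map_rel' h := (copies_adj.1 h).2

theorem colorable_copies {c : ℕ} (h : H.Colorable c) : (copies H n).Colorable c :=
  h.of_hom copiesProj

theorem colorable_induce_compl_copies {T : Finset W} {c : ℕ}
    (h : (H.induce (↑T)ᶜ).Colorable c) :
    ((copies H n).induce (↑(univ ×ˢ T : Finset (Fin n × W)))ᶜ).Colorable c :=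
  h.of_hom (induceHom copiesProj fun x hx => by simpa [copiesProj] using hx)

theorem not_colorable_induce_compl_copies {S : Finset (Fin n × W)} {T : Finset W} {c : ℕ}
    (i : Fin n) (hST : ∀ w, (i, w) ∈ S → w ∈ T) (h : ¬ (H.induce (↑T)ᶜ).Colorable c) :
    ¬ ((copies H n).induce (↑S)ᶜ).Colorable c := fun hc =>
  h (hc.of_hom (induceHom (t := (↑S)ᶜ) (boxProdRight _ H i).toHom
    fun w hw hS => hw (hST w hS)))

theorem not_colorable_copies {c : ℕ} (i : Fin n)
    (h : ¬ (H.induce (↑(∅ : Finset W))ᶜ).Colorable c) : ¬ (copies H n).Colorable c := fun hc =>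
  not_colorable_induce_compl_copies (S := ∅) i (by simp) h (hc.of_hom (Embedding.induce _).toHom)

theorem exists_fibre_card_lt [DecidableEq W] {S : Finset (Fin n × W)} {b : ℕ}
    (hS : S.card < n * b) :
    ∃ (i : Fin n) (T : Finset W), T.card < b ∧ ∀ w, (i, w) ∈ S ↔ w ∈ T := by
  obtain ⟨i, -, hi⟩ := Finset.exists_card_fiber_lt_of_card_lt_mul (s := S) (f := Prod.fst)
    (t := univ) (by rwa [card_univ, Fintype.card_fin])
  exact ⟨i, (S.filter (·.1 = i)).image Prod.snd, card_image_le.trans_lt hi, fun w => by simp⟩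

theorem maxDeg_copies [Fintype W] (hn : 0 < n) : maxDeg (copies H n) = maxDeg H := by
  have hcard : ∀ x : Fin n × W,
      Nat.card ((copies H n).neighborSet x) = Nat.card (H.neighborSet x.2) := fun x =>
    Nat.card_congr ⟨fun y => ⟨y.1.2, (copies_adj.1 y.2).2⟩,
      fun w => ⟨(x.1, w.1), copies_adj.2 ⟨rfl, w.2⟩⟩,
      fun y => by ext <;> simp [(copies_adj.1 y.2).1], fun w => rfl⟩
  have : Nonempty (Fin n) := ⟨⟨0, hn⟩⟩
  simp only [maxDeg, hcard, ← univ_product_univ, sup_product_left, sup_const univ_nonempty]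

end Copies

structure IsStabilityGadget [Fintype W] (H : SimpleGraph W) (k : ℕ) : Prop where
  colorable : H.Colorable k
  exists_isNClique_not_mem :
    ∀ a b, ¬ H.Adj a b → ∃ Q : Finset W, H.IsNClique k Q ∧ a ∉ Q ∧ b ∉ Q
  exists_pair : ∃ P : Finset W, P.card = 2 ∧ (H.induce (↑P)ᶜ).Colorable (k - 1)
  exists_triple : ∃ T : Finset W, T.card = 3 ∧ (∀ u ∈ T, ∀ v ∈ T, ¬ H.Adj u v) ∧
    (H.induce (↑T)ᶜ).Colorable (k - 1)
  maxDeg_eq : maxDeg H = 2 * k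

namespace IsStabilityGadget

variable [Fintype W] {H : SimpleGraph W} {k n : ℕ}

theorem not_colorable_induce_compl (hH : IsStabilityGadget H k) (hk : 0 < k) {T : Finset W}
    (hT : T.card ≤ 2) (hind : ∀ u ∈ T, ∀ v ∈ T, ¬ H.Adj u v) :
    ¬ (H.induce (↑T)ᶜ).Colorable (k - 1) := by
  classical
  obtain ⟨a, b, hab, hTab⟩ : ∃ a b, ¬ H.Adj a b ∧ T ⊆ {a, b} := by
    interval_cases h : T.card
    · obtain ⟨P, hP, -⟩ := hH.exists_pair
      obtain ⟨a, -⟩ := card_pos.1 (by omega : 0 < P.card)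
      exact ⟨a, a, H.irrefl, by simp [card_eq_zero.1 h]⟩
    · obtain ⟨a, rfl⟩ := card_eq_one.1 h
      exact ⟨a, a, H.irrefl, by simp⟩
    · obtain ⟨a, b, -, rfl⟩ := card_eq_two.1 h
      exact ⟨a, b, hind a (by simp) b (by simp), subset_rfl⟩
  obtain ⟨Q, hQ, haQ, hbQ⟩ := hH.exists_isNClique_not_mem a b hab
  refine not_colorable_induce_of_isNClique hQ (fun v hv hvT => ?_) (by omega)
  rcases mem_insert.1 (hTab hvT) with rfl | hvb
  · exact haQ hv
  · exact hbQ (mem_singleton.1 hvb ▸ hv)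

theorem chromNum_copies (hH : IsStabilityGadget H k) (hk : 0 < k) (hn : 0 < n) :
    chromNum (copies H n) = k := by
  refine le_antisymm (chromNum_le_iff.2 (colorable_copies hH.colorable)) (not_lt.1 fun hlt => ?_)
  exact not_colorable_copies ⟨0, hn⟩ (hH.not_colorable_induce_compl hk (by simp) (by simp))
    (chromNum_le_iff.1 (Nat.le_sub_one_of_lt hlt))

theorem vsChi_copies (hH : IsStabilityGadget H k) (hk : 0 < k) (hn : 0 < n) :
    vsChi (copies H n) = 2 * n := by
  classical
  obtain ⟨P, hP, hcol⟩ := hH.exists_pair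
  refine vsChi_eq_of (c := k - 1) (by rw [hH.chromNum_copies hk hn]; omega) (S₀ := univ ×ˢ P)
    (by simp [hP, mul_comm]) (by omega) (colorable_induce_compl_copies hcol) fun S hS => ?_
  obtain ⟨i, T, hT, hST⟩ := exists_fibre_card_lt (b := 2) (by linarith : S.card < n * 2)
  refine not_colorable_induce_compl_copies i (fun w => (hST w).1)
    (hH.not_colorable_induce_compl hk (by omega) fun u hu v hv => ?_)
  rw [card_le_one.1 (by omega) u hu v hv]
  exact H.irrefl

theorem ivsChi_copies (hH : IsStabilityGadget H k) (hk : 0 < k) (hn : 0 < n) :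
    ivsChi (copies H n) = 3 * n := by
  classical
  obtain ⟨T₀, hT₀, hind₀, hcol⟩ := hH.exists_triple
  refine ivsChi_eq_of (c := k - 1) (by rw [hH.chromNum_copies hk hn]; omega) (S₀ := univ ×ˢ T₀)
    (by simp [hT₀, mul_comm]) (by omega) ?_ (colorable_induce_compl_copies hcol)
    fun S hind hS => ?_
  · simp only [mem_product, mem_univ, true_and, copies_adj]
    exact fun u hu v hv h => hind₀ _ hu _ hv h.2
  obtain ⟨i, T, hT, hST⟩ := exists_fibre_card_lt (b := 3) (by linarith : S.card < n * 3)
  exact not_colorable_induce_compl_copies i (fun w => (hST w).1)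
    (hH.not_colorable_induce_compl hk (by omega) fun u hu v hv h =>
      hind _ ((hST u).2 hu) _ ((hST v).2 hv) (copies_adj.2 ⟨rfl, h⟩))

end IsStabilityGadget

-- the 4-cycle 0123 with the chord 02, each of its five edges completed to a triangle by one of
-- the vertices 4, …, 8
abbrev gadget3 : SimpleGraph (Fin 9) :=
  fromEdgeSet ↑({s(0, 1), s(1, 2), s(2, 3), s(3, 0), s(0, 2), s(0, 4), s(3, 4), s(0, 5), s(1, 5),
    s(1, 6), s(2, 6), s(2, 7), s(3, 7), s(0, 8), s(2, 8)} : Finset (Sym2 (Fin 9)))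

set_option maxRecDepth 10000 in
theorem isStabilityGadget_gadget3 : IsStabilityGadget gadget3 3 := by
  have hcol : ∀ (S : Finset (Fin 9)) (f : Fin 9 → ℕ),
      (∀ v ∉ S, f v < 2) → (∀ u ∉ S, ∀ v ∉ S, gadget3.Adj u v → f u ≠ f v) →
      (gadget3.induce (↑S)ᶜ).Colorable (3 - 1) := fun S f hlt hf =>
    colorable_induce_iff.2 ⟨f, fun v hv => hlt v hv, fun u hu v hv => hf u hu v hv⟩
  let triangles : Finset (Finset (Fin 9)) := {{0, 3, 4}, {0, 1, 5}, {1, 2, 6}, {2, 3, 7}, {0, 2, 8}}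
  refine ⟨?_, fun a b hab => ?_,
    ⟨{0, 2}, rfl, hcol _ ![0, 0, 0, 0, 1, 1, 1, 1, 0] (by decide) (by decide)⟩,
    ⟨{1, 3, 8}, rfl, by decide, hcol _ ![0, 0, 1, 0, 1, 1, 0, 0, 0] (by decide) (by decide)⟩,
    maxDeg_eq_of_degree (by decide) 0 (by decide)⟩
  · simpa using (Coloring.mk (![0, 1, 2, 1, 2, 2, 0, 0, 1] : Fin 9 → Fin 3) (by decide)).colorable
  · obtain ⟨Q, hQ, hQab⟩ :=
      (by decide : ∀ a b : Fin 9, ¬ gadget3.Adj a b → ∃ Q ∈ triangles, a ∉ Q ∧ b ∉ Q) a b hab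
    exact ⟨Q, (by decide : ∀ Q ∈ triangles, gadget3.IsNClique 3 Q) Q hQ, hQab⟩

section Ring

variable (r : ℕ)

abbrev RingVertex := Fin 4 ⊕ Fin 4 × Fin (r + 2)

/- The hubs `inl i` form a `K₄`, and block `j` (the vertices `inr (j, t)`) is a clique joined to
the hubs `j` and `j - 1`, which gives the four `(r + 4)`-cliques `ringClique r j`. The one extra
edge from hub `0` to `inr (2, 1)` raises the maximum degree to exactly `2 (r + 4)`. -/
def ringGraph : SimpleGraph (RingVertex r) where
  Adj x y := match x, y with
    | .inl i, .inl j => i ≠ j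
    | .inl m, .inr (j, t) | .inr (j, t), .inl m => j = m ∨ j = m + 1 ∨ (m = 0 ∧ j = 2 ∧ t = 1)
    | .inr (i, t), .inr (j, u) => i = j ∧ t ≠ u
  symm := ⟨by
    rintro (i | ⟨j, t⟩) (i' | ⟨j', t'⟩) h
    · exact Ne.symm h
    · exact h
    · exact h
    · exact ⟨h.1.symm, h.2.symm⟩⟩
  loopless := ⟨by
    rintro (i | ⟨j, t⟩) h
    · exact h rfl
    · exact h.2 rfl⟩

instance : DecidableRel (ringGraph r).Adj := fun x y =>
  match x, y with
  | .inl i, .inl j => inferInstanceAs (Decidable (i ≠ j))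
  | .inl _, .inr _ | .inr _, .inl _ => inferInstanceAs (Decidable (_ ∨ _ ∨ _))
  | .inr _, .inr _ => inferInstanceAs (Decidable (_ ∧ _))

def ringClique (i : Fin 4) : Finset (RingVertex r) :=
  ({i, i + 3} : Finset (Fin 4)).disjSum ({i} ×ˢ univ)

def ringTriple : Finset (RingVertex r) := {.inl 0, .inr (2, 0), .inr (3, 0)}

variable {r}

@[simp] theorem ringGraph_inl_adj_inl {i j : Fin 4} :
    (ringGraph r).Adj (.inl i) (.inl j) ↔ i ≠ j := Iff.rfl

@[simp] theorem ringGraph_inl_adj_inr {m j : Fin 4} {t : Fin (r + 2)} :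
    (ringGraph r).Adj (.inl m) (.inr (j, t)) ↔ j = m ∨ j = m + 1 ∨ (m = 0 ∧ j = 2 ∧ t = 1) :=
  Iff.rfl

@[simp] theorem ringGraph_inr_adj_inl {m j : Fin 4} {t : Fin (r + 2)} :
    (ringGraph r).Adj (.inr (j, t)) (.inl m) ↔ j = m ∨ j = m + 1 ∨ (m = 0 ∧ j = 2 ∧ t = 1) :=
  Iff.rfl

@[simp] theorem ringGraph_inr_adj_inr {i j : Fin 4} {t u : Fin (r + 2)} :
    (ringGraph r).Adj (.inr (i, t)) (.inr (j, u)) ↔ i = j ∧ t ≠ u := Iff.rfl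

@[simp] theorem inl_mem_ringClique {i m : Fin 4} :
    .inl m ∈ ringClique r i ↔ m = i ∨ m = i + 3 := by
  simp [ringClique]

@[simp] theorem inr_mem_ringClique {i j : Fin 4} {t : Fin (r + 2)} :
    .inr (j, t) ∈ ringClique r i ↔ j = i := by
  simp [ringClique, eq_comm]

theorem isNClique_ringClique (i : Fin 4) :
    (ringGraph r).IsNClique (r + 4) (ringClique r i) := by
  have h3 : ∀ i : Fin 4, i ≠ i + 3 ∧ i = i + 3 + 1 := by decide
  refine ⟨?_, ?_⟩
  · rintro (m | ⟨j, t⟩) hx (m' | ⟨j', t'⟩) hy hne <;> simp only [mem_coe] at hx hy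
    · simpa using hne
    · rw [inl_mem_ringClique] at hx
      rw [inr_mem_ringClique] at hy
      rcases hx with rfl | rfl
      · exact Or.inl hy
      · exact Or.inr (Or.inl (hy.trans (h3 i).2))
    · rw [inl_mem_ringClique] at hy
      rw [inr_mem_ringClique] at hx
      rcases hy with rfl | rfl
      · exact Or.inl hx
      · exact Or.inr (Or.inl (hx.trans (h3 i).2))
    · rw [inr_mem_ringClique] at hx hy
      subst hx hy
      exact ⟨rfl, fun h => hne (by rw [h])⟩
  · rw [ringClique, card_disjSum, card_pair (h3 i).1, card_product, card_singleton, card_univ,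
      Fintype.card_fin]
    ring

theorem exists_ringClique_not_mem {a b : RingVertex r} (hab : ¬ (ringGraph r).Adj a b) :
    ∃ i, a ∉ ringClique r i ∧ b ∉ ringClique r i := by
  have hub : ∀ m j : Fin 4, ¬ (j = m ∨ j = m + 1) → ∃ i, ¬ (m = i ∨ m = i + 3) ∧ j ≠ i := by
    decide
  rcases a with m | ⟨j, t⟩ <;> rcases b with m' | ⟨j', t'⟩ <;>
    simp only [inl_mem_ringClique, inr_mem_ringClique]
  · obtain rfl : m = m' := not_not.1 hab
    simpa using (by decide : ∀ m : Fin 4, ∃ i, ¬ (m = i ∨ m = i + 3)) m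
  · exact hub m j' fun h => hab (h.imp_right Or.inl)
  · simpa [and_comm] using hub m' j fun h => hab (h.imp_right Or.inl)
  · exact (by decide : ∀ j j' : Fin 4, ∃ i, j ≠ i ∧ j' ≠ i) j j'

theorem not_adj_of_mem_ringTriple {u v : RingVertex r} (hu : u ∈ ringTriple r)
    (hv : v ∈ ringTriple r) : ¬ (ringGraph r).Adj u v := by
  simp only [ringTriple, mem_insert, mem_singleton] at hu hv
  rcases hu with rfl | rfl | rfl <;> rcases hv with rfl | rfl | rfl <;> simp

theorem colorable_induce_ringGraph_of {s : Set (RingVertex r)} {c : ℕ} (hub : Fin 4 → ℕ)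
    (block : Fin 4 → ℕ → ℕ) (hub_lt : ∀ m, .inl m ∈ s → hub m < c)
    (block_lt : ∀ j (t : Fin (r + 2)), .inr (j, t) ∈ s → block j t < c)
    (hub_ne : ∀ i j, .inl i ∈ s → .inl j ∈ s → i ≠ j → hub i ≠ hub j)
    (hub_ne_block : ∀ m j (t : Fin (r + 2)), .inl m ∈ s → .inr (j, t) ∈ s →
      (ringGraph r).Adj (.inl m) (.inr (j, t)) → hub m ≠ block j t)
    (block_injective : ∀ j, Function.Injective (block j)) :
    ((ringGraph r).induce s).Colorable c := by
  refine colorable_induce_iff.2 ⟨Sum.elim hub fun x => block x.1 x.2, ?_, ?_⟩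
  · rintro (m | ⟨j, t⟩) hx
    exacts [hub_lt m hx, block_lt j t hx]
  · rintro (m | ⟨j, t⟩) hx (m' | ⟨j', t'⟩) hy hadj
    · exact hub_ne m m' hx hy hadj
    · exact hub_ne_block m j' t' hx hy hadj
    · exact (hub_ne_block m' j t hy hx hadj).symm
    · obtain ⟨rfl, hne⟩ := hadj
      exact fun h => hne (Fin.ext (block_injective j h))

-- hub `m` gets colour `m`; block `j` lists the colours other than `j` and `j - 1`
theorem colorable_ringGraph : (ringGraph r).Colorable (r + 4) := by
  refine (colorable_induce_ringGraph_of (s := Set.univ) (fun m => m)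
    ![fun t => if t < 2 then t + 1 else t + 2, fun t => t + 2,
      fun t => if t = 0 then 0 else t + 2, fun t => if t < 2 then t else t + 2]
    (fun m _ => by omega) (fun j t _ => ?_) (fun i j _ _ h => fun h' => h (Fin.ext h'))
    (fun m j t _ _ hadj => ?_) fun j => ?_).of_hom (induceUnivIso _).symm.toHom
  · fin_cases j <;> simp <;> split_ifs <;> omega
  · fin_cases m <;> fin_cases j <;> simp [Fin.ext_iff, -Fin.val_eq_zero_iff] at hadj ⊢ <;>
      (try split_ifs) <;> first | omega | simp
  · fin_cases j <;> intro t u h <;> simp at h <;> (try split_ifs at h) <;> omega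

-- hubs `1, 3` get colours `0, 1`; blocks `1, 2` meet only hub `1`, blocks `0, 3` only hub `3`
theorem colorable_ringGraph_induce_pair :
    ((ringGraph r).induce (↑({.inl 0, .inl 2} : Finset (RingVertex r)))ᶜ).Colorable (r + 3) := by
  refine colorable_induce_ringGraph_of (fun m => if m = 3 then 1 else 0)
    ![fun t => if t = 0 then 0 else t + 1, fun t => t + 1, fun t => t + 1,
      fun t => if t = 0 then 0 else t + 1]
    (fun m _ => by split_ifs <;> omega) (fun j t _ => ?_) (fun i j hi hj h => ?_)
    (fun m j t hm _ hadj => ?_) fun j => ?_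
  · fin_cases j <;> simp <;> split_ifs <;> omega
  · fin_cases i <;> fin_cases j <;> simp at hi hj h ⊢
  · fin_cases m <;> fin_cases j <;> simp [Fin.ext_iff, -Fin.val_eq_zero_iff] at hm hadj ⊢ <;>
      (try split_ifs) <;> first | omega | simp
  · fin_cases j <;> intro t u h <;> simp at h <;> (try split_ifs at h) <;> omega

-- hub `m` gets colour `m - 1`; blocks `2` and `3` have lost their vertex `0`, which frees the
-- colours needed next to the hubs `1, 2` and `2, 3`
theorem colorable_ringGraph_induce_ringTriple :
    ((ringGraph r).induce (↑(ringTriple r))ᶜ).Colorable (r + 3) := by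
  refine colorable_induce_ringGraph_of (fun m => m - 1)
    ![fun t => if t < 2 then t else t + 1, fun t => t + 1, fun t => t + 1,
      fun t => if t = 1 then 0 else t + 1]
    (fun m _ => by omega) (fun j t _ => ?_) (fun i j hi hj h => ?_)
    (fun m j t hm ht hadj => ?_) fun j => ?_
  · fin_cases j <;> simp <;> split_ifs <;> omega
  · fin_cases i <;> fin_cases j <;> simp [ringTriple] at hi hj h ⊢
  · fin_cases m <;> fin_cases j <;>
      simp [ringTriple, Fin.ext_iff, -Fin.val_eq_zero_iff] at hm ht hadj ⊢ <;>
      (try split_ifs) <;> first | omega | simp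
  · fin_cases j <;> intro t u h <;> simp at h <;> (try split_ifs at h) <;> omega

theorem degree_ringGraph_le (x : RingVertex r) : (ringGraph r).degree x ≤ 2 * (r + 4) := by
  rw [← card_neighborFinset_eq_degree]
  rcases x with m | ⟨j, t⟩
  · have hsub : (ringGraph r).neighborFinset (.inl m) ⊆
        (univ.erase m).disjSum (insert (2, 1) ({m, m + 1} ×ˢ univ)) := by
      rintro (m' | ⟨j', t'⟩) h <;> rw [mem_neighborFinset] at h
      · simpa [ne_comm] using h
      · rcases h with rfl | rfl | ⟨-, rfl, rfl⟩ <;> simp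
    calc _ ≤ (univ.erase m).card + ((({m, m + 1} : Finset (Fin 4)) ×ˢ univ).card + 1) := by
          grw [card_le_card hsub, card_disjSum, card_insert_le]
      _ ≤ 3 + (2 * (r + 2) + 1) := by
          grw [card_erase_of_mem (mem_univ _), card_product, card_le_two]
          simp
      _ = 2 * (r + 4) := by ring
  · have hsub : (ringGraph r).neighborFinset (.inr (j, t)) ⊆ univ.disjSum ({j} ×ˢ univ) := by
      rintro (m' | ⟨j', t'⟩) h <;> rw [mem_neighborFinset] at h
      · simp
      · simp [h.1]
    grw [card_le_card hsub, card_disjSum, card_product]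
    simp only [card_univ, Fintype.card_fin, card_singleton, one_mul]
    omega

theorem le_degree_ringGraph_inl_zero : 2 * (r + 4) ≤ (ringGraph r).degree (.inl 0) := by
  let N : Finset (RingVertex r) :=
    ({1, 2, 3} : Finset (Fin 4)).disjSum (insert (2, 1) (({0, 1} : Finset (Fin 4)) ×ˢ univ))
  have hsub : N ⊆ (ringGraph r).neighborFinset (.inl 0) := by
    rintro (m' | ⟨j', t'⟩) h <;> simp [N, mem_neighborFinset] at h ⊢
    · rcases h with rfl | rfl | rfl <;> decide
    · rcases h with ⟨rfl, rfl⟩ | rfl | rfl <;> simp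
  have hN : N.card = 2 * (r + 4) := by
    rw [card_disjSum, card_insert_of_notMem (s := ({0, 1} : Finset (Fin 4)) ×ˢ univ) (by simp),
      card_product, card_pair (by decide), card_univ, Fintype.card_fin,
      (by decide : ({1, 2, 3} : Finset (Fin 4)).card = 3)]
    ring
  rw [← card_neighborFinset_eq_degree, ← hN]
  exact card_le_card hsub

theorem isStabilityGadget_ringGraph : IsStabilityGadget (ringGraph r) (r + 4) where
  colorable := colorable_ringGraph
  exists_isNClique_not_mem _ _ hab :=
    let ⟨i, hi⟩ := exists_ringClique_not_mem hab
    ⟨_, isNClique_ringClique i, hi⟩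
  exists_pair := ⟨_, card_pair (by simp), colorable_ringGraph_induce_pair⟩
  exists_triple := ⟨ringTriple r, by simp [ringTriple],
    fun _ hu _ hv => not_adj_of_mem_ringTriple hu hv, colorable_ringGraph_induce_ringTriple⟩
  maxDeg_eq := maxDeg_eq_of_degree degree_ringGraph_le (.inl 0) le_degree_ringGraph_inl_zero

end Ring

theorem exists_isStabilityGadget {k : ℕ} (hk : 3 ≤ k) :
    ∃ (W : Type) (_ : Fintype W) (H : SimpleGraph W), IsStabilityGadget H k := by
  obtain rfl | hk := hk.eq_or_lt
  · exact ⟨_, _, _, isStabilityGadget_gadget3⟩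
  · obtain ⟨r, rfl⟩ : ∃ r, k = r + 4 := ⟨k - 4, by omega⟩
    exact ⟨_, _, _, isStabilityGadget_ringGraph⟩

/-- For all natural numbers $n ≥ 2$ and $k ≥ 3$ there exists a finite simple
graph $G$ with $χ(G) = k$, $Δ(G) = 2k$, $vs_χ(G) = 2n$, and
$ivs_χ(G) = 3n$. -/
theorem stmt_12 (n k : ℕ) (hn : 2 ≤ n) (hk : 3 ≤ k) :
    ∃ (m : ℕ) (G : SimpleGraph (Fin m)),
      chromNum G = k ∧ maxDeg G = 2 * k ∧
      vsChi G = 2 * n ∧ ivsChi G = 3 * n := by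
  obtain ⟨W, _, H, hH⟩ := exists_isStabilityGadget hk
  let e := Iso.map (Fintype.equivFin (Fin n × W)) (copies H n)
  refine ⟨_, (copies H n).map (Fintype.equivFin _), ?_, ?_, ?_, ?_⟩
  · rw [← e.chromNum_eq, hH.chromNum_copies (by omega) (by omega)]
  · rw [← e.maxDeg_eq, maxDeg_copies (by omega), hH.maxDeg_eq]
  · rw [← e.vsChi_eq, hH.vsChi_copies (by omega) (by omega)]
  · rw [← e.ivsChi_eq, hH.ivsChi_copies (by omega) (by omega)]
end
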